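/- Let t be a trace containing events of type a at strictly increasing timestamps o_1 < o_2 < ... < o_m (m ≥ 2). The set of event-pairs generated for et-pair (a,a) with the reuse rule is exactly {(o_j, o_{j+1}) : 1 ≤ j ≤ m−1}, and this set has the property that for every v ≥ 0, there exist two events of type a in t within time v of each other (i.e., ∃ j < k with o_k.ts − o_j.ts ≤ v) if and only if some generated pair (o_j, o_{j+1}) satisfies o_{j+1}.ts − o_j.ts ≤ v. -/

import Mathlib

structure Event where
  type : ℕ
  ts : ℤ
deriving DecidableEq

namespace List

variable {α : Type*}

theorem mem_zip_tail_iff {l : List α} {pr : α × α} :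
    pr ∈ l.zip l.tail ↔
      ∃ j, ∃ hj : j + 1 < l.length, pr = (l.get ⟨j, Nat.lt_of_succ_lt hj⟩, l.get ⟨j + 1, hj⟩) := by
  rw [mem_iff_get]
  constructor
  · rintro ⟨⟨j, hj⟩, rfl⟩
    have hj' : j + 1 < l.length := by simp only [length_zip, length_tail] at hj; omega
    exact ⟨j, hj', by simp⟩
  · rintro ⟨j, hj, rfl⟩
    exact ⟨⟨j, by simp only [length_zip, length_tail]; omega⟩, by simp⟩

theorem Pairwise.map_get_le_of_le {β : Type*} [Preorder β] {f : α → β} {l : List α}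
    (hl : l.Pairwise (fun x y => f x ≤ f y)) {i k : ℕ} (hi : i < l.length) (hk : k < l.length)
    (hik : i ≤ k) : f (l.get ⟨i, hi⟩) ≤ f (l.get ⟨k, hk⟩) := by
  rcases hik.eq_or_lt with rfl | hlt
  · rfl
  · exact pairwise_iff_get.mp hl ⟨i, hi⟩ ⟨k, hk⟩ hlt

theorem Pairwise.exists_sub_le_iff_exists_succ_sub_le {β : Type*} [AddCommGroup β]
    [LinearOrder β] [IsOrderedAddMonoid β] {f : α → β} {l : List α}
    (hl : l.Pairwise (fun x y => f x ≤ f y)) (v : β) :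
    (∃ j k, ∃ hj : j < l.length, ∃ hk : k < l.length, j < k ∧
        f (l.get ⟨k, hk⟩) - f (l.get ⟨j, hj⟩) ≤ v) ↔
      ∃ j, ∃ hj : j + 1 < l.length,
        f (l.get ⟨j + 1, hj⟩) - f (l.get ⟨j, Nat.lt_of_succ_lt hj⟩) ≤ v := by
  constructor
  · rintro ⟨j, k, hj, hk, hjk, hle⟩
    have hj1 : j + 1 < l.length := by omega
    have hmono := hl.map_get_le_of_le hj1 hk hjk
    exact ⟨j, hj1, le_trans (sub_le_sub_right hmono _) hle⟩
  · rintro ⟨j, hj, hle⟩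
    exact ⟨j, j + 1, Nat.lt_of_succ_lt hj, hj, Nat.lt_succ_self j, hle⟩

end List

theorem stmt5_general (t : List Event) (ht : t.Chain' (fun e1 e2 => e1.ts < e2.ts)) (a : ℕ)
    (os : List Event) (hos : os = t.filter (fun ev => decide (ev.type = a))) :
    (∀ pr : Event × Event, pr ∈ os.zip os.tail ↔
      ∃ j, ∃ hj : j + 1 < os.length,
        pr = (os.get ⟨j, Nat.lt_of_succ_lt hj⟩, os.get ⟨j + 1, hj⟩)) ∧
    (∀ v : ℤ, 0 ≤ v →
      ((∃ j k, ∃ hj : j < os.length, ∃ hk : k < os.length, j < k ∧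
          (os.get ⟨k, hk⟩).ts - (os.get ⟨j, hj⟩).ts ≤ v) ↔
        (∃ j, ∃ hj : j + 1 < os.length,
          (os.get ⟨j + 1, hj⟩).ts - (os.get ⟨j, Nat.lt_of_succ_lt hj⟩).ts ≤ v))) := by
  have : IsTrans Event (fun e1 e2 => e1.ts < e2.ts) := ⟨fun _ _ _ => lt_trans⟩
  have hsorted : os.Pairwise (fun e1 e2 => e1.ts ≤ e2.ts) := by
    rw [hos]
    exact ((List.isChain_iff_pairwise.mp ht).sublist List.filter_sublist).imp le_of_lt
  exact ⟨fun _ => List.mem_zip_tail_iff,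
    fun v _ => hsorted.exists_sub_le_iff_exists_succ_sub_le v⟩

/-- Let `os` (with `|os| = m ≥ 2`) be the type-`a` events of a trace in
strictly increasing timestamp order.  The event-pairs generated for the et-pair `(a,a)`
with the reuse rule (`os.zip os.tail`) are exactly the consecutive pairs
`(o_j, o_{j+1})`, and for every `v ≥ 0` there exist two type-`a` events within time `v`
of each other iff some generated (consecutive) pair has gap at most `v`. -/
theorem stmt5 (t : List Event) (ht : t.Chain' (fun e1 e2 => e1.ts < e2.ts)) (a : ℕ)
    (os : List Event) (hos : os = t.filter (fun ev => decide (ev.type = a)))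
    (hm : 2 ≤ os.length) :
    (∀ pr : Event × Event, pr ∈ os.zip os.tail ↔
      ∃ j, ∃ hj : j + 1 < os.length,
        pr = (os.get ⟨j, Nat.lt_of_succ_lt hj⟩, os.get ⟨j + 1, hj⟩)) ∧
    (∀ v : ℤ, 0 ≤ v →
      ((∃ j k, ∃ hj : j < os.length, ∃ hk : k < os.length, j < k ∧
          (os.get ⟨k, hk⟩).ts - (os.get ⟨j, hj⟩).ts ≤ v) ↔
        (∃ j, ∃ hj : j + 1 < os.length,
          (os.get ⟨j + 1, hj⟩).ts - (os.get ⟨j, Nat.lt_of_succ_lt hj⟩).ts ≤ v))) :=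
  stmt5_general t ht a os hos
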